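/- arXiv:1606.03650 — 2 statements merged into one kernel-verified Lean document; each statement's English description precedes it below -/
import Mathlib

section
/- (Bregman-distance rate for the regularized solution.) Assume δ > 0, σ ∈ (0,1], 1 < τ̲ ≤ τ̄ < ∞, ‖f† − f^δ‖_H ≤ δ, Ψ is a concave index function, the variational source condition holds with coefficient σ, index function Ψ and a subgradient p† of J at φ†, φ_α^δ minimizes F_α over V with α > 0, the discrepancy bound ‖Tφ_α^δ − f^δ‖_H ≤ τ̄·δ holds, and (σ/4)·(τ̲ − 1)·δ² ≤ α·Ψ(δ). Then (σ/2)·D_J(φ_α^δ, φ†) ≤ ( 2/(σ·(τ̲ − 1)) + (τ̄ + 1) )·Ψ(δ), where D_J(φ_α^δ, φ†) := J(φ_α^δ) − J(φ†) − ⟨p†, φ_α^δ − φ†⟩. -/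
/-!
Minimality of `φ_α^δ` against `φ†` gives `α (J φ_α^δ - J φ†) ≤ δ²/2`, which the lower bound on `α`
turns into `J φ_α^δ - J φ† ≤ 2 Ψ(δ) / (σ (τ̲ - 1))`. The residual `‖T φ_α^δ - T φ†‖` is at most
`(τ̄ + 1) δ`, and a concave index function grows at most linearly, so `Ψ` of the residual is at most
`(τ̄ + 1) Ψ(δ)`. The variational source condition at `φ_α^δ` adds the two bounds.
-/

open Set

theorem ConcaveOn.map_mul_le_mul_map {f : ℝ → ℝ} (hf : ConcaveOn ℝ (Ici 0) f) (h₀ : 0 ≤ f 0)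
    {c x : ℝ} (hc : 1 ≤ c) (hx : 0 ≤ x) : f (c * x) ≤ c * f x := by
  have hc₀ : 0 < c := by linarith
  -- `x` is the convex combination `c⁻¹ • (c * x) + (1 - c⁻¹) • 0`
  have hcomb := hf.2 (mem_Ici.2 (mul_nonneg hc₀.le hx)) (mem_Ici.2 le_rfl)
    (inv_nonneg.2 hc₀.le) (sub_nonneg.2 (inv_le_one_of_one_le₀ hc)) (add_sub_cancel _ _)
  simp only [smul_eq_mul, mul_zero, add_zero, inv_mul_cancel_left₀ hc₀.ne'] at hcomb
  have h₁ : 0 ≤ (1 - c⁻¹) * f 0 := mul_nonneg (sub_nonneg.2 (inv_le_one_of_one_le₀ hc)) h₀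
  calc f (c * x) = c * (c⁻¹ * f (c * x)) := (mul_inv_cancel_left₀ hc₀.ne' _).symm
    _ ≤ c * f x := by gcongr; linarith

section Tikhonov

variable {V H : Type*} [SeminormedAddCommGroup H]

noncomputable def tikhonov (T : V → H) (J : V → ℝ) (f : H) (α : ℝ) (φ : V) : ℝ :=
  1 / 2 * ‖T φ - f‖ ^ 2 + α * J φ

theorem tikhonov_penalty_gap_le {T : V → H} {J : V → ℝ} {f : H} {α δ : ℝ} {φα φ : V}
    (hmin : tikhonov T J f α φα ≤ tikhonov T J f α φ) (hnoise : ‖T φ - f‖ ≤ δ) :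
    α * (J φα - J φ) ≤ δ ^ 2 / 2 := by
  unfold tikhonov at hmin
  have hsq : ‖T φ - f‖ ^ 2 ≤ δ ^ 2 := pow_le_pow_left₀ (norm_nonneg _) hnoise 2
  linarith [sq_nonneg ‖T φα - f‖]

end Tikhonov

theorem le_div_mul_of_mul_le_sq_div_two {α κ d δ ψ : ℝ} (hα : 0 < α) (hκ : 0 < κ)
    (hgap : α * d ≤ δ ^ 2 / 2) (hlow : κ * δ ^ 2 ≤ 4 * α * ψ) : d ≤ 2 / κ * ψ := by
  rw [div_mul_eq_mul_div, le_div_iff₀ hκ]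
  have : α * (κ * d) ≤ α * (2 * ψ) := by nlinarith
  linarith [le_of_mul_le_mul_left this hα]

theorem bregman_distance_rate_general
    {V H : Type*} [NormedAddCommGroup V] [NormedSpace ℝ V]
    [NormedAddCommGroup H] [InnerProductSpace ℝ H]
    (T : V →L[ℝ] H) (J : V → ℝ)
    (φdag φα : V) (fδ : H) (δ σ α τl τu : ℝ)
    (hσ0 : 0 < σ) (hα : 0 < α)
    (hτl : 1 < τl) (hτlu : τl ≤ τu)
    (hnoise : ‖T φdag - fδ‖ ≤ δ)
    (Ψ : ℝ → ℝ)
    (hΨmono : MonotoneOn Ψ (Ici (0 : ℝ)))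
    (hΨ0 : Ψ 0 = 0)
    (hΨconc : ConcaveOn ℝ (Ici (0 : ℝ)) Ψ)
    (pdag : V →L[ℝ] ℝ)
    (hVSC : ∀ φ : V, (σ / 2) * (J φ - J φdag - pdag (φ - φdag)) ≤
      J φ - J φdag + Ψ ‖T φ - T φdag‖)
    (hmin : ∀ φ : V, (1 / 2) * ‖T φα - fδ‖ ^ 2 + α * J φα ≤
      (1 / 2) * ‖T φ - fδ‖ ^ 2 + α * J φ)
    (hdisc_up : ‖T φα - fδ‖ ≤ τu * δ)
    (hlow : (σ / 4) * (τl - 1) * δ ^ 2 ≤ α * Ψ δ) :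
    (σ / 2) * (J φα - J φdag - pdag (φα - φdag)) ≤
      (2 / (σ * (τl - 1)) + (τu + 1)) * Ψ δ := by
  have hδ : 0 ≤ δ := (norm_nonneg _).trans hnoise
  have hgap : J φα - J φdag ≤ 2 / (σ * (τl - 1)) * Ψ δ :=
    le_div_mul_of_mul_le_sq_div_two hα (mul_pos hσ0 (sub_pos.2 hτl))
      (tikhonov_penalty_gap_le (hmin φdag) hnoise) (by linarith)
  have hres : ‖T φα - T φdag‖ ≤ (τu + 1) * δ := by
    calc ‖T φα - T φdag‖ ≤ ‖T φα - fδ‖ + ‖fδ - T φdag‖ := norm_sub_le_norm_sub_add_norm_sub ..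
      _ ≤ (τu + 1) * δ := by rw [norm_sub_rev fδ]; linarith
  have hΨres : Ψ ‖T φα - T φdag‖ ≤ (τu + 1) * Ψ δ :=
    (hΨmono (norm_nonneg _) (mul_nonneg (by linarith) hδ) hres).trans
      (hΨconc.map_mul_le_mul_map hΨ0.ge (by linarith) hδ)
  linarith [hVSC φα]

/-- Bregman-distance rate for the regularized solution (Theorem 5.3 of the paper):
under the VSC, the upper discrepancy bound and the new lower bound for `α`, one has
`(σ/2)·D_J(φ_α^δ, φ†) ≤ (2/(σ·(τ̲ − 1)) + (τ̄ + 1))·Ψ(δ)`. -/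
theorem bregman_distance_rate
    {V H : Type*} [NormedAddCommGroup V] [NormedSpace ℝ V] [CompleteSpace V]
    [NormedAddCommGroup H] [InnerProductSpace ℝ H] [CompleteSpace H]
    (T : V →L[ℝ] H) (J : V → ℝ) (hJ : ConvexOn ℝ Set.univ J)
    (φdag φα : V) (fδ : H) (δ σ α τl τu : ℝ)
    (hδ : 0 < δ) (hσ0 : 0 < σ) (hσ1 : σ ≤ 1) (hα : 0 < α)
    (hτl : 1 < τl) (hτlu : τl ≤ τu)
    (hnoise : ‖T φdag - fδ‖ ≤ δ)
    (Ψ : ℝ → ℝ)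
    (hΨcont : ContinuousOn Ψ (Ici (0 : ℝ)))
    (hΨmono : MonotoneOn Ψ (Ici (0 : ℝ)))
    (hΨ0 : Ψ 0 = 0)
    (hΨnonneg : ∀ t ∈ Ici (0 : ℝ), 0 ≤ Ψ t)
    (hΨconc : ConcaveOn ℝ (Ici (0 : ℝ)) Ψ)
    (pdag : V →L[ℝ] ℝ)
    (hpdag : ∀ v : V, pdag (v - φdag) ≤ J v - J φdag)
    (hVSC : ∀ φ : V, (σ / 2) * (J φ - J φdag - pdag (φ - φdag)) ≤
      J φ - J φdag + Ψ ‖T φ - T φdag‖)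
    (hmin : ∀ φ : V, (1 / 2) * ‖T φα - fδ‖ ^ 2 + α * J φα ≤
      (1 / 2) * ‖T φ - fδ‖ ^ 2 + α * J φ)
    (hdisc_up : ‖T φα - fδ‖ ≤ τu * δ)
    (hlow : (σ / 4) * (τl - 1) * δ ^ 2 ≤ α * Ψ δ) :
    (σ / 2) * (J φα - J φdag - pdag (φα - φdag)) ≤
      (2 / (σ * (τl - 1)) + (τu + 1)) * Ψ δ :=
  bregman_distance_rate_general T J φdag φα fδ δ σ α τl τu hσ0 hα hτl hτlu hnoise Ψ hΨmono hΨ0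
    hΨconc pdag hVSC hmin hdisc_up hlow
end

section
/- (Symmetric Bregman-distance rate.) Assume δ > 0, σ ∈ (0,1], 1 < τ̲ ≤ τ̄ < ∞, ‖f† − f^δ‖_H ≤ δ, Ψ is a concave index function, the variational source condition holds with coefficient σ, index function Ψ and a subgradient p† of J at φ†, φ_α^δ minimizes F_α over V with α > 0, the discrepancy bound ‖Tφ_α^δ − f^δ‖_H ≤ τ̄·δ holds, (σ/4)·(τ̲ − 1)·δ² ≤ α·Ψ(δ), and the functional p ∈ V* given by ⟨p, h⟩ := (1/α)·⟪f^δ − Tφ_α^δ, T h⟫_H is a subgradient of J at φ_α^δ. Then the symmetric Bregman distance satisfies D_J^sym(φ_α^δ, φ†) := D_J(φ_α^δ, φ†) + D_J(φ†, φ_α^δ) ≤ [ (2/σ)·( 2/(σ·(τ̲ − 1)) + (τ̄ + 1) ) + (τ̄ + 1) + 4·τ̄·(τ̄ + 1)/(σ·(τ̲ − 1)) ]·Ψ(δ), where D_J(φ_α^δ, φ†) is taken with the subgradient p† and D_J(φ†, φ_α^δ) with the subgradient p. -/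
/-!
Minimality of `φ_α^δ` tested against `φ†` gives `J(φ_α^δ) - J(φ†) ≤ δ²/(2α)`, and the lower
bound on `α` turns `δ²/α` into `4 Ψ(δ)/(σ(τ̲ - 1))`. Since `‖Tφ_α^δ - Tφ†‖ ≤ (τ̄ + 1)δ` and
concavity gives `Ψ((τ̄ + 1)δ) ≤ (τ̄ + 1)Ψ(δ)`, the VSC at `φ_α^δ` bounds `D_J(φ_α^δ, φ†)`, and,
as this distance is nonnegative, also `J(φ†) - J(φ_α^δ)`. The remaining part
`-⟨p, φ† - φ_α^δ⟩ = -(1/α)⟪f^δ - Tφ_α^δ, Tφ† - Tφ_α^δ⟫` of `D_J(φ†, φ_α^δ)` is at most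
`‖Tφ_α^δ - f^δ‖ ‖Tφ† - f^δ‖/α ≤ τ̄δ²/α`.
-/

open Set RealInnerProductSpace

theorem ConcaveOn.map_mul_le_mul {f : ℝ → ℝ} (hf : ConcaveOn ℝ (Ici 0) f) (h0 : 0 ≤ f 0)
    {c t : ℝ} (hc : 1 ≤ c) (ht : 0 ≤ t) : f (c * t) ≤ c * f t := by
  have hc0 : 0 < c := by linarith
  have hchord := hf.2 (mul_nonneg hc0.le ht : c * t ∈ Ici 0) self_mem_Ici
    (inv_nonneg.2 hc0.le) (sub_nonneg.2 (inv_le_one_of_one_le₀ hc)) (add_sub_cancel _ _)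
  simp only [smul_eq_mul, mul_zero, add_zero, inv_mul_cancel_left₀ hc0.ne'] at hchord
  have hshrink : c⁻¹ * f (c * t) ≤ f t := by
    linarith [mul_nonneg (sub_nonneg.2 (inv_le_one_of_one_le₀ hc)) h0]
  calc f (c * t) = c * (c⁻¹ * f (c * t)) := by field_simp
    _ ≤ c * f t := by gcongr

theorem neg_inner_sub_sub_le_norm_mul_norm {H : Type*} [NormedAddCommGroup H]
    [InnerProductSpace ℝ H] (f x y : H) : -⟪f - y, x - y⟫ ≤ ‖y - f‖ * ‖x - f‖ := by
  have hsplit : ⟪f - y, x - y⟫ = ⟪f - y, x - f⟫ + ‖f - y‖ ^ 2 := by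
    rw [← real_inner_self_eq_norm_sq, ← inner_add_right, sub_add_sub_cancel]
  have hcs := neg_le_of_abs_le (abs_real_inner_le_norm (f - y) (x - f))
  rw [norm_sub_rev y f]
  linarith [sq_nonneg ‖f - y‖]

section Tikhonov

variable {V H : Type*} [NormedAddCommGroup V] [NormedSpace ℝ V]
  [NormedAddCommGroup H] [InnerProductSpace ℝ H]

theorem tikhonov_minimizer_penalty_gap_le (T : V →L[ℝ] H) (J : V → ℝ) {φ φα : V} {fδ : H}
    {δ α : ℝ} (hφ : ‖T φ - fδ‖ ≤ δ)
    (hmin : (1 / 2) * ‖T φα - fδ‖ ^ 2 + α * J φα ≤ (1 / 2) * ‖T φ - fδ‖ ^ 2 + α * J φ) :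
    α * (J φα - J φ) ≤ δ ^ 2 / 2 := by
  have hsq : ‖T φ - fδ‖ ^ 2 ≤ δ ^ 2 := pow_le_pow_left₀ (norm_nonneg _) hφ 2
  nlinarith [sq_nonneg ‖T φα - fδ‖]

theorem neg_residual_pairing_le (T : V →L[ℝ] H) (p : V →L[ℝ] ℝ) (φ φα : V) (fδ : H)
    {α : ℝ} (hα : 0 < α) (hp : ∀ h : V, p h = (1 / α) * ⟪fδ - T φα, T h⟫) :
    α * -p (φ - φα) ≤ ‖T φα - fδ‖ * ‖T φ - fδ‖ := by
  rw [hp, map_sub, mul_neg, ← mul_assoc, mul_one_div_cancel hα.ne', one_mul]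
  exact neg_inner_sub_sub_le_norm_mul_norm fδ (T φ) (T φα)

end Tikhonov

theorem symmetric_bregman_distance_rate_general
    {V H : Type*} [NormedAddCommGroup V] [NormedSpace ℝ V]
    [NormedAddCommGroup H] [InnerProductSpace ℝ H]
    (T : V →L[ℝ] H) (J : V → ℝ)
    (φdag φα : V) (fδ : H) (δ σ α τl τu : ℝ)
    (hδ : 0 < δ) (hσ0 : 0 < σ) (hα : 0 < α)
    (hτl : 1 < τl) (hτlu : τl ≤ τu)
    (hnoise : ‖T φdag - fδ‖ ≤ δ)
    (Ψ : ℝ → ℝ)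
    (hΨmono : MonotoneOn Ψ (Ici (0 : ℝ)))
    (hΨ0 : Ψ 0 = 0)
    (hΨnonneg : ∀ t ∈ Ici (0 : ℝ), 0 ≤ Ψ t)
    (hΨconc : ConcaveOn ℝ (Ici (0 : ℝ)) Ψ)
    (pdag : V →L[ℝ] ℝ)
    (hpdag : ∀ v : V, pdag (v - φdag) ≤ J v - J φdag)
    (hVSC : ∀ φ : V, (σ / 2) * (J φ - J φdag - pdag (φ - φdag)) ≤
      J φ - J φdag + Ψ ‖T φ - T φdag‖)
    (hmin : ∀ φ : V, (1 / 2) * ‖T φα - fδ‖ ^ 2 + α * J φα ≤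
      (1 / 2) * ‖T φ - fδ‖ ^ 2 + α * J φ)
    (hdisc_up : ‖T φα - fδ‖ ≤ τu * δ)
    (hlow : (σ / 4) * (τl - 1) * δ ^ 2 ≤ α * Ψ δ)
    (p : V →L[ℝ] ℝ)
    (hp : ∀ h : V, p h = (1 / α) * ⟪fδ - T φα, T h⟫) :
    (J φα - J φdag - pdag (φα - φdag)) + (J φdag - J φα - p (φdag - φα)) ≤
      ((2 / σ) * (2 / (σ * (τl - 1)) + (τu + 1)) + (τu + 1) +
        4 * τu * (τu + 1) / (σ * (τl - 1))) * Ψ δ := by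
  have hτu : 0 ≤ τu := by linarith
  have hs : 0 < σ * (τl - 1) := mul_pos hσ0 (sub_pos.2 hτl)
  have hΨδ : 0 ≤ Ψ δ := hΨnonneg δ hδ.le
  set K := Ψ δ / (σ * (τl - 1)) with hK
  have hδα : δ ^ 2 ≤ α * (4 * K) := by
    rw [hK, mul_div_assoc', mul_div_assoc', le_div_iff₀ hs]; nlinarith
  have hgap : J φα - J φdag ≤ 2 * K := le_of_mul_le_mul_left (by
    nlinarith [tikhonov_minimizer_penalty_gap_le T J hnoise (hmin φdag)]) hα
  have hpair : -p (φdag - φα) ≤ 4 * τu * K := le_of_mul_le_mul_left (by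
    nlinarith [neg_residual_pairing_le T p φdag φα fδ hα hp,
      mul_le_mul hdisc_up hnoise (norm_nonneg _) (mul_nonneg hτu hδ.le)]) hα
  have hresidual : ‖T φα - T φdag‖ ≤ (τu + 1) * δ := by
    linarith [norm_sub_le_norm_sub_add_norm_sub (T φα) fδ (T φdag), norm_sub_rev fδ (T φdag)]
  have hΨres : Ψ ‖T φα - T φdag‖ ≤ (τu + 1) * Ψ δ :=
    (hΨmono (norm_nonneg _) (by positivity : (0 : ℝ) ≤ (τu + 1) * δ) hresidual).trans
      (hΨconc.map_mul_le_mul hΨ0.ge (by linarith) hδ.le)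
  have hD1 := (hVSC φα).trans (add_le_add_right hΨres _)
  have hD1nonneg : 0 ≤ J φα - J φdag - pdag (φα - φdag) := sub_nonneg.2 (hpdag φα)
  have hD1le : J φα - J φdag - pdag (φα - φdag) ≤ 2 / σ * (2 * K + (τu + 1) * Ψ δ) := by
    rw [div_mul_eq_mul_div, le_div_iff₀ hσ0]; linarith
  have hJgap : J φdag - J φα ≤ (τu + 1) * Ψ δ := by nlinarith [mul_nonneg hσ0.le hD1nonneg]
  have hτK : 4 * τu * K ≤ 4 * τu * (τu + 1) * K := by
    nlinarith [mul_nonneg hτu (div_nonneg hΨδ hs.le)]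
  calc _ ≤ 2 / σ * (2 * K + (τu + 1) * Ψ δ) + (τu + 1) * Ψ δ + 4 * τu * (τu + 1) * K := by
        linarith
    _ = _ := by rw [hK]; field_simp

/-- Symmetric Bregman-distance rate (Corollary 5.5 of the paper): under the VSC, the upper
discrepancy bound, the new lower bound for `α`, minimality of `φ_α^δ`, and first-order
optimality, the symmetric Bregman distance
`D_J^sym(φ_α^δ, φ†) = D_J(φ_α^δ, φ†) + D_J(φ†, φ_α^δ)` (the first taken with the
subgradient `p†` of `J` at `φ†`, the second with the subgradient `p` of `J` at `φ_α^δ`)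
is bounded by `((2/σ)·(2/(σ·(τ̲ − 1)) + (τ̄ + 1)) + (τ̄ + 1) + 4·τ̄·(τ̄ + 1)/(σ·(τ̲ − 1)))·Ψ(δ)`. -/
theorem symmetric_bregman_distance_rate
    {V H : Type*} [NormedAddCommGroup V] [NormedSpace ℝ V] [CompleteSpace V]
    [NormedAddCommGroup H] [InnerProductSpace ℝ H] [CompleteSpace H]
    (T : V →L[ℝ] H) (J : V → ℝ) (hJ : ConvexOn ℝ Set.univ J)
    (φdag φα : V) (fδ : H) (δ σ α τl τu : ℝ)
    (hδ : 0 < δ) (hσ0 : 0 < σ) (hσ1 : σ ≤ 1) (hα : 0 < α)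
    (hτl : 1 < τl) (hτlu : τl ≤ τu)
    (hnoise : ‖T φdag - fδ‖ ≤ δ)
    (Ψ : ℝ → ℝ)
    (hΨcont : ContinuousOn Ψ (Ici (0 : ℝ)))
    (hΨmono : MonotoneOn Ψ (Ici (0 : ℝ)))
    (hΨ0 : Ψ 0 = 0)
    (hΨnonneg : ∀ t ∈ Ici (0 : ℝ), 0 ≤ Ψ t)
    (hΨconc : ConcaveOn ℝ (Ici (0 : ℝ)) Ψ)
    (pdag : V →L[ℝ] ℝ)
    (hpdag : ∀ v : V, pdag (v - φdag) ≤ J v - J φdag)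
    (hVSC : ∀ φ : V, (σ / 2) * (J φ - J φdag - pdag (φ - φdag)) ≤
      J φ - J φdag + Ψ ‖T φ - T φdag‖)
    (hmin : ∀ φ : V, (1 / 2) * ‖T φα - fδ‖ ^ 2 + α * J φα ≤
      (1 / 2) * ‖T φ - fδ‖ ^ 2 + α * J φ)
    (hdisc_up : ‖T φα - fδ‖ ≤ τu * δ)
    (hlow : (σ / 4) * (τl - 1) * δ ^ 2 ≤ α * Ψ δ)
    (p : V →L[ℝ] ℝ)
    (hp : ∀ h : V, p h = (1 / α) * ⟪fδ - T φα, T h⟫)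
    (hp_subgrad : ∀ v : V, p (v - φα) ≤ J v - J φα) :
    (J φα - J φdag - pdag (φα - φdag)) + (J φdag - J φα - p (φdag - φα)) ≤
      ((2 / σ) * (2 / (σ * (τl - 1)) + (τu + 1)) + (τu + 1) +
        4 * τu * (τu + 1) / (σ * (τl - 1))) * Ψ δ :=
  symmetric_bregman_distance_rate_general T J φdag φα fδ δ σ α τl τu hδ hσ0 hα hτl hτlu hnoise Ψ
    hΨmono hΨ0 hΨnonneg hΨconc pdag hpdag hVSC hmin hdisc_up hlow p hp
end
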